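/- Let X be a conjugacy class of a finite group G such that the subgroup of G generated by X is non-abelian, and let r: X×X → X×X be given by r(x,y) = (xyx⁻¹, x). Then the structure group G(X,r) has a non-trivial element of finite order; in particular G(X,r) is not torsion free. -/

import Mathlib

universe u

namespace YBE

variable {X : Type u}

/-- `r` acting on the first two coordinates of `X × X × X`. -/
def r12 (r : X × X → X × X) : X × X × X → X × X × X :=
  fun p => ((r (p.1, p.2.1)).1, (r (p.1, p.2.1)).2, p.2.2)

/-- `r` acting on the last two coordinates of `X × X × X`. -/
def r23 (r : X × X → X × X) : X × X × X → X × X × X :=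
  fun p => (p.1, r p.2)

/-- The braid relation `(r×id)(id×r)(r×id) = (id×r)(r×id)(id×r)`. -/
def IsBraid (r : X × X → X × X) : Prop :=
  r12 r ∘ r23 r ∘ r12 r = r23 r ∘ r12 r ∘ r23 r

/-- Non-degeneracy: writing `r (x, y) = (σ x y, γ y x)`, each `σ x` and each `γ y`
is a permutation of `X`. -/
def IsNonDeg (r : X × X → X × X) : Prop :=
  (∀ x : X, Function.Bijective fun y => (r (x, y)).1) ∧
  (∀ y : X, Function.Bijective fun x => (r (x, y)).2)

/-- The relations `x y = u v` whenever `r (x, y) = (u, v)` of the structure group. -/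
def structRels (r : X × X → X × X) : Set (FreeGroup X) :=
  {w | ∃ x y : X, w = FreeGroup.of x * FreeGroup.of y *
    (FreeGroup.of (r (x, y)).1 * FreeGroup.of (r (x, y)).2)⁻¹}

/-- The structure group `G(X,r)` of a solution, presented with generating set `X` and
relations `x y = u v` whenever `r (x, y) = (u, v)`. -/
abbrev StructureGroup (r : X × X → X × X) : Type u := PresentedGroup (structRels r)

/-- The canonical map `X → G(X,r)`. -/
def iota (r : X × X → X × X) : X → StructureGroup r := fun x => PresentedGroup.of x

/-- The setoid identifying `x` and `y` whenever `σ x = σ y`. -/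
def retractSetoid (r : X × X → X × X) : Setoid X where
  r x y := (fun z => (r (x, z)).1) = (fun z => (r (y, z)).1)
  iseqv := ⟨fun _ => rfl, Eq.symm, Eq.trans⟩

/-- The underlying set of the retraction. -/
abbrev RetSet (r : X × X → X × X) : Type u := Quotient (retractSetoid r)

/-- The retracted solution on `X/∼` (for non-degenerate involutive solutions this is
well defined, and computing it on the chosen representatives gives the retraction). -/
noncomputable def retractMap (r : X × X → X × X) : RetSet r × RetSet r → RetSet r × RetSet r :=
  fun p => (Quotient.mk (retractSetoid r) (r (p.1.out, p.2.out)).1,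
            Quotient.mk (retractSetoid r) (r (p.1.out, p.2.out)).2)

/-- The iterated retractions `Ret^m (X, r)`, as pairs (set, map). -/
noncomputable def retIter (X : Type u) (r : X × X → X × X) : ℕ → (Y : Type u) × (Y × Y → Y × Y)
  | 0 => ⟨X, r⟩
  | m + 1 => ⟨RetSet (retIter X r m).2, retractMap (retIter X r m).2⟩

/-- `(X, r)` is a multipermutation solution if some iterated retraction `Ret^m (X, r)`,
`m ≥ 1`, has exactly one element. -/
def IsMultipermutation (X : Type u) (r : X × X → X × X) : Prop :=
  ∃ m : ℕ, 1 ≤ m ∧ Nat.card (retIter X r m).1 = 1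

end YBE

/-- A group is left orderable if it admits a total order invariant under left
multiplication. -/
def LeftOrderable (G : Type*) [Group G] : Prop :=
  ∃ lo : LinearOrder G, ∀ x y z : G, lo.lt x y → lo.lt (z * x) (z * y)

/-- A group is poly-ℤ if it has a subnormal series with all quotients infinite cyclic. -/
def IsPolyZ (G : Type*) [Group G] : Prop :=
  ∃ (n : ℕ) (s : Fin (n + 1) → Subgroup G),
    s 0 = ⊥ ∧ s (Fin.last n) = ⊤ ∧
    ∀ i : Fin n, s i.castSucc ≤ s i.succ ∧
      ∃ hn : ((s i.castSucc).subgroupOf (s i.succ)).Normal,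
        haveI := hn
        Nonempty ((↥(s i.succ) ⧸ (s i.castSucc).subgroupOf (s i.succ)) ≃* Multiplicative ℤ)

namespace YBE

variable {G : Type*} [Group G]

/-- The conjugacy class of `g₀` in `G`. -/
abbrev ConjClassOf (G : Type*) [Group G] (g₀ : G) : Type _ := {x : G // IsConj g₀ x}

/-- The solution `r (x, y) = (x y x⁻¹, x)` on a conjugacy class. -/
def conjSol (G : Type*) [Group G] (g₀ : G) :
    ConjClassOf G g₀ × ConjClassOf G g₀ → ConjClassOf G g₀ × ConjClassOf G g₀ :=
  fun p => (⟨p.1.1 * p.2.1 * p.1.1⁻¹, p.2.2.trans (isConj_iff.mpr ⟨p.1.1, rfl⟩)⟩, p.1)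

end YBE

open scoped commutatorElement

namespace YBE

variable {G : Type*} [Group G] (g₀ : G)

/-- Conjugation on a conjugacy class. -/
def ccConj (g : G) (x : ConjClassOf G g₀) : ConjClassOf G g₀ :=
  ⟨g * x.1 * g⁻¹, x.2.trans (isConj_iff.mpr ⟨g, rfl⟩)⟩

/-- The canonical homomorphism from the structure group to `G`. -/
def conjPi : StructureGroup (conjSol G g₀) →* G :=
  PresentedGroup.toGroup (f := fun x : ConjClassOf G g₀ => x.1) <| by
    rintro w ⟨x, y, rfl⟩
    simp only [map_mul, map_inv, FreeGroup.lift_apply_of, conjSol]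
    group

@[simp] lemma conjPi_iota (x : ConjClassOf G g₀) :
    conjPi g₀ (iota (conjSol G g₀) x) = x.1 :=
  PresentedGroup.toGroup.of _

lemma iota_rel (x y : ConjClassOf G g₀) :
    iota (conjSol G g₀) x * iota (conjSol G g₀) y =
      iota (conjSol G g₀) (ccConj g₀ x.1 y) * iota (conjSol G g₀) x := by
  have hmem : (FreeGroup.of x * FreeGroup.of y *
      (FreeGroup.of (conjSol G g₀ (x, y)).1 * FreeGroup.of (conjSol G g₀ (x, y)).2)⁻¹) ∈
      Subgroup.normalClosure (structRels (conjSol G g₀)) :=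
    Subgroup.subset_normalClosure ⟨x, y, rfl⟩
  have h1 : (QuotientGroup.mk (FreeGroup.of x * FreeGroup.of y *
      (FreeGroup.of (conjSol G g₀ (x, y)).1 * FreeGroup.of (conjSol G g₀ (x, y)).2)⁻¹) :
      StructureGroup (conjSol G g₀)) = 1 := (QuotientGroup.eq_one_iff _).mpr hmem
  have h2 : iota (conjSol G g₀) x * iota (conjSol G g₀) y *
      (iota (conjSol G g₀) (conjSol G g₀ (x, y)).1 * iota (conjSol G g₀) (conjSol G g₀ (x, y)).2)⁻¹
      = 1 := by
    exact h1
  have h3 := mul_inv_eq_one.mp h2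
  have hx1 : (conjSol G g₀ (x, y)).1 = ccConj g₀ x.1 y := rfl
  have hx2 : (conjSol G g₀ (x, y)).2 = x := rfl
  rw [hx1, hx2] at h3
  exact h3

lemma iota_conj (w : StructureGroup (conjSol G g₀)) (x : ConjClassOf G g₀) :
    w * iota (conjSol G g₀) x * w⁻¹ = iota (conjSol G g₀) (ccConj g₀ (conjPi g₀ w) x) := by
  have hw : w ∈ Subgroup.closure (Set.range (PresentedGroup.of :
      ConjClassOf G g₀ → StructureGroup (conjSol G g₀))) := by
    rw [PresentedGroup.closure_range_of]; exact Subgroup.mem_top w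
  refine Subgroup.closure_induction
    (p := fun w _ => ∀ x : ConjClassOf G g₀,
      w * iota (conjSol G g₀) x * w⁻¹ = iota (conjSol G g₀) (ccConj g₀ (conjPi g₀ w) x))
    ?_ ?_ ?_ ?_ hw x
  · rintro w ⟨y, rfl⟩ x
    have h1 := iota_rel g₀ y x
    have h : iota (conjSol G g₀) y * iota (conjSol G g₀) x * (iota (conjSol G g₀) y)⁻¹ =
        iota (conjSol G g₀) (ccConj g₀ y.1 x) := by
      rw [h1]; group
    show iota (conjSol G g₀) y * iota (conjSol G g₀) x * (iota (conjSol G g₀) y)⁻¹ = _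
    have hp : (conjPi g₀) (PresentedGroup.of y : StructureGroup (conjSol G g₀)) = y.1 :=
      conjPi_iota g₀ y
    rw [h, hp]
  · intro x
    simp only [one_mul, inv_one, mul_one, map_one]
    congr 1
    exact Subtype.ext (by simp [ccConj])
  · intro a b _ _ ha hb x
    have h : a * b * iota (conjSol G g₀) x * (a * b)⁻¹ =
        a * (b * iota (conjSol G g₀) x * b⁻¹) * a⁻¹ := by group
    rw [h, hb, ha, map_mul]
    congr 1
    exact Subtype.ext (by simp [ccConj, mul_assoc])
  · intro a _ ha x
    have h := ha (ccConj g₀ (conjPi g₀ a)⁻¹ x)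
    have hfix : ccConj g₀ (conjPi g₀ a) (ccConj g₀ (conjPi g₀ a)⁻¹ x) = x :=
      Subtype.ext (by simp [ccConj, mul_assoc])
    rw [hfix] at h
    have h2 : a⁻¹ * iota (conjSol G g₀) x * a =
        iota (conjSol G g₀) (ccConj g₀ (conjPi g₀ a)⁻¹ x) := by
      rw [← h]; group
    rw [map_inv]
    calc a⁻¹ * iota (conjSol G g₀) x * a⁻¹⁻¹
        = a⁻¹ * iota (conjSol G g₀) x * a := by rw [inv_inv]
    _ = _ := h2

lemma ker_le_center :
    (conjPi g₀).ker ≤ Subgroup.center (StructureGroup (conjSol G g₀)) := by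
  intro k hk
  rw [Subgroup.mem_center_iff]
  intro g
  have hg : g ∈ Subgroup.closure (Set.range (PresentedGroup.of :
      ConjClassOf G g₀ → StructureGroup (conjSol G g₀))) := by
    rw [PresentedGroup.closure_range_of]; exact Subgroup.mem_top g
  refine Subgroup.closure_induction (p := fun g _ => g * k = k * g) ?_ ?_ ?_ ?_ hg
  · rintro g ⟨y, rfl⟩
    have h := iota_conj g₀ k y
    have hk1 : conjPi g₀ k = 1 := MonoidHom.mem_ker.mp hk
    have hy : ccConj g₀ (conjPi g₀ k) y = y := by
      rw [hk1]; exact Subtype.ext (by simp [ccConj])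
    rw [hy] at h
    show iota (conjSol G g₀) y * k = k * iota (conjSol G g₀) y
    rw [mul_inv_eq_iff_eq_mul] at h
    exact h.symm
  · simp
  · intro a b _ _ ha hb
    rw [mul_assoc, hb, ← mul_assoc, ha, mul_assoc]
  · intro a _ ha
    calc a⁻¹ * k = a⁻¹ * (k * a) * a⁻¹ := by group
    _ = a⁻¹ * (a * k) * a⁻¹ := by rw [← ha]
    _ = k * a⁻¹ := by group

lemma commutator_central_left {S : Type*} [Group S] (z a b : S)
    (hz : z ∈ Subgroup.center S) : ⁅a * z, b⁆ = ⁅a, b⁆ := by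
  have hzb : z * b = b * z := (Subgroup.mem_center_iff.mp hz b).symm
  rw [commutatorElement_def, commutatorElement_def, mul_inv_rev]
  have h : a * z * b = a * b * z := by rw [mul_assoc, hzb, ← mul_assoc]
  rw [h]; group

lemma commutator_central_right {S : Type*} [Group S] (w a b : S)
    (hw : w ∈ Subgroup.center S) : ⁅a, b * w⁆ = ⁅a, b⁆ := by
  have hwa : w * a⁻¹ = a⁻¹ * w := (Subgroup.mem_center_iff.mp hw a⁻¹).symm
  rw [commutatorElement_def, commutatorElement_def, mul_inv_rev]
  have h : a * (b * w) * a⁻¹ = a * b * a⁻¹ * w := by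
    rw [← mul_assoc, mul_assoc (a * b) w a⁻¹, hwa, ← mul_assoc]
  rw [h]; group

end YBE

open YBE in
/-- If `X` is a conjugacy class of a finite group `G` such that the subgroup
generated by `X` is non-abelian, then the structure group of the solution
`r (x, y) = (x y x⁻¹, x)` has a non-trivial element of finite order; in particular
it is not torsion free. -/
theorem conjSol_structureGroup_has_torsion {G : Type*} [Group G] [Finite G] (g₀ : G)
    (hna : ¬ ∀ a ∈ Subgroup.closure {x : G | IsConj g₀ x},
        ∀ b ∈ Subgroup.closure {x : G | IsConj g₀ x}, a * b = b * a) :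
    ∃ a : StructureGroup (conjSol G g₀), a ≠ 1 ∧ IsOfFinOrder a := by
  push_neg at hna
  obtain ⟨a, ha, b, hb, hab⟩ := hna
  set S := StructureGroup (conjSol G g₀)
  set π : S →* G := conjPi g₀ with hπ
  -- commutators only depend on images under π
  have hinv : ∀ a b a' b' : S, π a = π a' → π b = π b' → ⁅a, b⁆ = ⁅a', b'⁆ := by
    intro p q p' q' hp hq
    have hz : p⁻¹ * p' ∈ Subgroup.center S :=
      ker_le_center g₀ (by simp [MonoidHom.mem_ker, ← hπ, ← hp])
    have hw : q⁻¹ * q' ∈ Subgroup.center S :=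
      ker_le_center g₀ (by simp [MonoidHom.mem_ker, ← hπ, ← hq])
    have hp' : p' = p * (p⁻¹ * p') := by group
    have hq' : q' = q * (q⁻¹ * q') := by group
    rw [hp', hq', commutator_central_left _ _ _ hz, commutator_central_right _ _ _ hw]
  -- the commutator set of S is finite
  have hfin : (commutatorSet S).Finite := by
    have : ∀ c ∈ commutatorSet S, ∃ p : π.range × π.range,
        ⁅Classical.choose (MonoidHom.mem_range.mp p.1.2),
          Classical.choose (MonoidHom.mem_range.mp p.2.2)⁆ = c := by
      rintro c ⟨s, t, rfl⟩
      refine ⟨(⟨π s, ⟨s, rfl⟩⟩, ⟨π t, ⟨t, rfl⟩⟩), ?_⟩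
      exact hinv _ _ _ _
        (Classical.choose_spec (MonoidHom.mem_range.mp (⟨s, rfl⟩ : π s ∈ π.range)))
        (Classical.choose_spec (MonoidHom.mem_range.mp (⟨t, rfl⟩ : π t ∈ π.range)))
    have hsub : commutatorSet S ⊆ Set.range (fun p : π.range × π.range =>
        ⁅Classical.choose (MonoidHom.mem_range.mp p.1.2),
          Classical.choose (MonoidHom.mem_range.mp p.2.2)⁆) := by
      intro c hc
      obtain ⟨p, hp⟩ := this c hc
      exact ⟨p, hp⟩
    exact (Set.finite_range _).subset hsub
  haveI : Finite (commutatorSet S) := hfin.to_subtype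
  haveI : Finite (_root_.commutator S) := inferInstance
  -- the closure of the conjugacy class lies in the range of π
  have hrange : Subgroup.closure {x : G | IsConj g₀ x} ≤ π.range := by
    rw [Subgroup.closure_le]
    intro x hx
    exact ⟨iota (conjSol G g₀) ⟨x, hx⟩, conjPi_iota g₀ _⟩
  obtain ⟨s, hs⟩ := hrange ha
  obtain ⟨t, ht⟩ := hrange hb
  refine ⟨⁅s, t⁆, ?_, ?_⟩
  · intro h
    apply hab
    have : π ⁅s, t⁆ = 1 := by rw [h, map_one]
    rw [map_commutatorElement, hs, ht] at this
    exact commutatorElement_eq_one_iff_mul_comm.mp this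
  · have hc : ⁅s, t⁆ ∈ _root_.commutator S :=
      Subgroup.commutator_mem_commutator (Subgroup.mem_top s) (Subgroup.mem_top t)
    have : IsOfFinOrder (⟨⁅s, t⁆, hc⟩ : _root_.commutator S) := isOfFinOrder_of_finite _
    simpa using (_root_.commutator S).subtype.isOfFinOrder this
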